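/- Let u : ℝ^d → ℝ, l ∈ ℝ^d, h > 0. Then pointwise |Δ_{h,l} u| ≤ |δ_{h,−l}((δ_{h,l} u)₊)| + |δ_{h,l}((δ_{h,−l} u)₊)|, where Δ_{h,l} u = −δ_{h,l} δ_{h,−l} u and w₊ denotes the pointwise positive part of w. -/

import Mathlib

/-- Discrete first difference operator δ_{h,l} u(x) = (u(x + h·l) − u(x))/h. -/
noncomputable def fdDelta {d : ℕ} (h : ℝ) (l : Fin d → ℝ) (u : (Fin d → ℝ) → ℝ) :
    (Fin d → ℝ) → ℝ :=
  fun x => (u (x + h • l) - u x) / h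

/-- Discrete second difference operator Δ_{h,l} u = −δ_{h,l} δ_{h,−l} u. -/
noncomputable def fdDelta2 {d : ℕ} (h : ℝ) (l : Fin d → ℝ) (u : (Fin d → ℝ) → ℝ) :
    (Fin d → ℝ) → ℝ :=
  fun x => -(fdDelta h l (fdDelta h (-l) u) x)

/-! With `s = δ_{h,l} u(x)` and `t = δ_{h,−l} u(x)` one has `Δ_{h,l} u(x) = (s + t)/h`, while the
two differences of positive parts are `((−t)₊ − s₊)/h` and `((−s)₊ − t₊)/h`, because the backward
difference at a shifted point is minus the forward one. The claim is then the triangle inequality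
applied to `s + t = (s₊ − (−t)₊) + (t₊ − (−s)₊)`. -/

lemma abs_add_le_abs_max_zero_sub_add_abs_max_zero_sub (s t : ℝ) :
    |s + t| ≤ |max (-t) 0 - max s 0| + |max (-s) 0 - max t 0| := by
  have hs := max_zero_sub_max_neg_zero_eq_self s
  have ht := max_zero_sub_max_neg_zero_eq_self t
  calc |s + t| = |(max s 0 - max (-t) 0) + (max t 0 - max (-s) 0)| := by congr 1; linarith
    _ ≤ |max s 0 - max (-t) 0| + |max t 0 - max (-s) 0| := abs_add_le _ _
    _ = _ := by rw [abs_sub_comm (max s 0), abs_sub_comm (max t 0)]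

section FiniteDifferences

variable {d : ℕ} (h : ℝ) (l : Fin d → ℝ) (u : (Fin d → ℝ) → ℝ) (x : Fin d → ℝ)

lemma fdDelta_apply : fdDelta h l u x = (u (x + h • l) - u x) / h := rfl

lemma fdDelta_neg_apply_add_smul :
    fdDelta h (-l) u (x + h • l) = -fdDelta h l u x := by
  simp only [fdDelta_apply, smul_neg, add_neg_cancel_right]
  ring

lemma fdDelta_apply_add_smul_neg :
    fdDelta h l u (x + h • -l) = -fdDelta h (-l) u x := by
  simpa only [neg_neg] using fdDelta_neg_apply_add_smul h (-l) u x

lemma fdDelta2_apply :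
    fdDelta2 h l u x = (fdDelta h l u x + fdDelta h (-l) u x) / h := by
  rw [fdDelta2, fdDelta_apply, fdDelta_neg_apply_add_smul]
  ring

lemma fdDelta_neg_max_fdDelta_zero :
    fdDelta h (-l) (fun y => max (fdDelta h l u y) 0) x
      = (max (-fdDelta h (-l) u x) 0 - max (fdDelta h l u x) 0) / h := by
  rw [fdDelta_apply, fdDelta_apply_add_smul_neg]

lemma fdDelta_max_fdDelta_neg_zero :
    fdDelta h l (fun y => max (fdDelta h (-l) u y) 0) x
      = (max (-fdDelta h l u x) 0 - max (fdDelta h (-l) u x) 0) / h := by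
  rw [fdDelta_apply, fdDelta_neg_apply_add_smul]

end FiniteDifferences

theorem abs_second_diff_le_pos_parts_general {d : ℕ}
    (u : (Fin d → ℝ) → ℝ) (l : Fin d → ℝ) (h : ℝ)
    (x : Fin d → ℝ) :
    |fdDelta2 h l u x|
      ≤ |fdDelta h (-l) (fun y => max (fdDelta h l u y) 0) x|
        + |fdDelta h l (fun y => max (fdDelta h (-l) u y) 0) x| := by
  rw [fdDelta2_apply, fdDelta_neg_max_fdDelta_zero, fdDelta_max_fdDelta_neg_zero,
    abs_div, abs_div, abs_div, ← add_div]
  exact div_le_div_of_nonneg_right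
    (abs_add_le_abs_max_zero_sub_add_abs_max_zero_sub _ _) (abs_nonneg h)

theorem abs_second_diff_le_pos_parts {d : ℕ}
    (u : (Fin d → ℝ) → ℝ) (l : Fin d → ℝ) (h : ℝ) (hh : 0 < h)
    (x : Fin d → ℝ) :
    |fdDelta2 h l u x|
      ≤ |fdDelta h (-l) (fun y => max (fdDelta h l u y) 0) x|
        + |fdDelta h l (fun y => max (fdDelta h (-l) u y) 0) x| :=
  abs_second_diff_le_pos_parts_general u l h x
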